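/- arXiv:1101.0464 — 5 statements merged into one kernel-verified Lean document; each statement's English description precedes it below -/
import Mathlib

section
/- Let R be a Noetherian commutative ring, I an ideal of R, and a ∈ I a regular element (non-zero-divisor) of R. Then I is of linear type over R if and only if the natural surjection S_{R/(a)}(I/(a)) ↠ 𝒜_{R↠R/(a)}(I/(a)) from the symmetric algebra of I/(a) over R/(a) onto the Aluffi algebra is an isomorphism. -/
/-!
Fix generators `f` of `I` and the presentation `φ : R[T] ↠ Rees_R(I)`, `Tᵢ ↦ fᵢ u`. The Aluffi
ideal `(a, a u)` is the image under `φ` of the ideal presenting `S_{R/(a)}(I/(a))`, so the kernel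
of `R[T] ↠ 𝒜` is that ideal plus `ker φ`. Hence the Aluffi map is an isomorphism iff every
homogeneous relation of `f` lies in `(a) + (L) + (linear relations of f)`, where `L` is a linear
form with `L(f) = a`; linear type says that it lies in the linear relations alone, which gives one
direction. Conversely, the summand in `(a)` of a relation `F` of positive degree can be absorbed,
because `a Tᵢ ≡ fᵢ L` modulo linear relations. So `F ≡ L B` with `deg B = deg F - 1`; as `a` is
regular, `B(f) = 0`, and induction on the degree finishes.
-/

open Polynomial

variable {R : Type*} [CommRing R]

/-- The defining ideal `(J, J̃)·Rees_R(I)` of the Aluffi algebra inside the Rees algebra. -/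
noncomputable def aluffiIdeal (I J : Ideal R) : Ideal (reesAlgebra I) :=
  Ideal.span {x : reesAlgebra I | ∃ a ∈ J, (x : R[X]) = C a ∨ (x : R[X]) = C a * X}

/-- The (R-embedded) Aluffi algebra of `I/J`, presented as `Rees_R(I)/(J, J̃)Rees_R(I)`. -/
noncomputable abbrev AluffiAlgebra (I J : Ideal R) :=
  reesAlgebra I ⧸ aluffiIdeal I J

/-- The presentation `A[T₁,…,Tₙ] → Rees_A(I)`, `Tᵢ ↦ fᵢ·u`, attached to a family of
elements of `I`. -/
noncomputable def reesPres {A : Type*} [CommRing A] (I : Ideal A) {n : ℕ}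
    (f : Fin n → A) (hf : ∀ i, f i ∈ I) :
    MvPolynomial (Fin n) A →ₐ[A] reesAlgebra I :=
  MvPolynomial.aeval fun i =>
    (⟨Polynomial.C (f i) * Polynomial.X, by
      rw [Polynomial.C_mul_X_eq_monomial]
      exact reesAlgebra.monomial_mem.mpr (by simpa using hf i)⟩ : reesAlgebra I)

/-- An ideal `I` of `A` is of linear type if, for every (equivalently, some) finite
generating family of `I`, the kernel of the presentation `A[T] ↠ Rees_A(I)` is generated
by its elements that are homogeneous of degree 1; i.e. the natural surjection
`S_A(I) ↠ Rees_A(I)` from the symmetric algebra is an isomorphism. -/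
def IsLinearType (A : Type*) [CommRing A] (I : Ideal A) : Prop :=
  ∀ (n : ℕ) (f : Fin n → A) (hf : ∀ i, f i ∈ I),
    Ideal.span (Set.range f) = I →
    RingHom.ker (reesPres I f hf : MvPolynomial (Fin n) A →+* reesAlgebra I) =
      Ideal.span {F : MvPolynomial (Fin n) A |
        F ∈ RingHom.ker (reesPres I f hf : MvPolynomial (Fin n) A →+* reesAlgebra I) ∧
        F.IsHomogeneous 1}

namespace MvPolynomial

variable {σ : Type*}

attribute [local instance] MvPolynomial.gradedAlgebra

theorem IsHomogeneous.homogeneousComponent_add_mul {G : MvPolynomial σ R} {d : ℕ}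
    (hG : G.IsHomogeneous d) (B : MvPolynomial σ R) (k : ℕ) :
    homogeneousComponent (d + k) (G * B) = G * homogeneousComponent k B := by
  rw [← decomposition.decompose'_apply, ← decomposition.decompose'_apply]
  exact DirectSum.coe_decompose_mul_add_of_left_mem _ ((mem_homogeneousSubmodule d G).mpr hG)

theorem IsHomogeneous.exists_sub_mul_mem_of_mem_span_sup {K : Ideal (MvPolynomial σ R)}
    (hK : K.IsHomogeneous (homogeneousSubmodule σ R)) {G F : MvPolynomial σ R} {d k : ℕ}
    (hG : G.IsHomogeneous d) (hF : F.IsHomogeneous (d + k)) (hmem : F ∈ Ideal.span {G} ⊔ K) :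
    ∃ B : MvPolynomial σ R, B.IsHomogeneous k ∧ F - G * B ∈ K := by
  obtain ⟨y, hy, z, hz, rfl⟩ := Submodule.mem_sup.mp hmem
  obtain ⟨B, rfl⟩ := Ideal.mem_span_singleton'.mp hy
  refine ⟨homogeneousComponent k B, homogeneousComponent_isHomogeneous k B, ?_⟩
  rw [← homogeneousComponent_eq_self hF, map_add, mul_comm B, hG.homogeneousComponent_add_mul,
    add_sub_cancel_left]
  exact homogeneousComponent_mem_of_mem hK hz _

variable (f : σ → R)

noncomputable def linearRelations : Ideal (MvPolynomial σ R) :=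
  Ideal.span {F | F.IsHomogeneous 1 ∧ aeval f F = 0}

/-- For `f` generating `I`, the kernel of the presentation `R[T] ↠ S_{R/J}(I/J)`. -/
noncomputable def symRelations (J : Ideal R) : Ideal (MvPolynomial σ R) :=
  Ideal.span ({F | ∃ b ∈ J, F = C b} ∪ {F | F.IsHomogeneous 1 ∧ aeval f F ∈ J})

theorem linearRelations_isHomogeneous :
    (linearRelations f).IsHomogeneous (homogeneousSubmodule σ R) :=
  Ideal.homogeneous_span _ _ fun _ hF => ⟨1, hF.1⟩

theorem aeval_eq_zero_of_mem_linearRelations {F : MvPolynomial σ R}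
    (hF : F ∈ linearRelations f) : aeval f F = 0 := by
  have : linearRelations f ≤ RingHom.ker (aeval f) :=
    Ideal.span_le.mpr fun _ hG => hG.2
  exact this hF

theorem linearRelations_le_symRelations (J : Ideal R) :
    linearRelations f ≤ symRelations f J :=
  Ideal.span_le.mpr fun G hG =>
    Ideal.subset_span (Or.inr ⟨hG.1, by rw [hG.2]; exact J.zero_mem⟩)

theorem exists_isHomogeneous_one_aeval_eq {b : R} (hb : b ∈ Ideal.span (Set.range f)) :
    ∃ L : MvPolynomial σ R, L.IsHomogeneous 1 ∧ aeval f L = b := by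
  rw [Ideal.span_eq_map_homogeneousSubmodule] at hb
  obtain ⟨L, hL, rfl⟩ := hb
  exact ⟨L, hL, rfl⟩

theorem IsHomogeneous.mem_span_range_X {F : MvPolynomial σ R} {t : ℕ} (hF : F.IsHomogeneous t)
    (ht : t ≠ 0) : F ∈ Ideal.span (Set.range X) := by
  rw [← Set.image_univ, mem_ideal_span_X_image]
  intro m hm
  have hm0 : m ≠ 0 := by
    rintro rfl
    exact ht (hF (mem_support_iff.mp hm)).symm
  obtain ⟨i, hi⟩ := Finsupp.ne_iff.mp hm0
  exact ⟨i, Set.mem_univ i, hi⟩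

variable {f} {a : R} {L : MvPolynomial σ R}

theorem C_mul_mem_span_sup_linearRelations (hL : L.IsHomogeneous 1) (hLa : aeval f L = a)
    {B : MvPolynomial σ R} (hB : B ∈ Ideal.span (Set.range X)) :
    C a * B ∈ Ideal.span {L} ⊔ linearRelations f := by
  induction hB using Submodule.span_induction with
  | mem _ hx =>
    obtain ⟨i, rfl⟩ := hx
    have hrel : C a * X i - C (f i) * L ∈ linearRelations f := by
      refine Ideal.subset_span ⟨((isHomogeneous_C σ a).mul (isHomogeneous_X R i)).sub
        ((isHomogeneous_C σ (f i)).mul hL), ?_⟩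
      simp only [map_sub, map_mul, aeval_C, aeval_X, hLa, Algebra.algebraMap_self,
        RingHom.id_apply, mul_comm, sub_self]
    have hmul : C (f i) * L ∈ Ideal.span {L} := Ideal.mem_span_singleton'.mpr ⟨_, rfl⟩
    simpa using add_mem (Submodule.mem_sup_right hrel) (Submodule.mem_sup_left hmul)
  | zero => simp
  | add x y _ _ hx hy => simpa [mul_add] using add_mem hx hy
  | smul c x _ hx => simpa [smul_eq_mul, mul_left_comm] using Ideal.mul_mem_left _ c hx

theorem symRelations_span_singleton_le (hL : L.IsHomogeneous 1) (hLa : aeval f L = a) :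
    symRelations f (Ideal.span {a}) ≤
      Ideal.span {C a} ⊔ (Ideal.span {L} ⊔ linearRelations f) := by
  refine Ideal.span_le.mpr ?_
  rintro G (⟨b, hb, rfl⟩ | ⟨hG, hGa⟩)
  · exact Submodule.mem_sup_left
      (Ideal.mem_span_singleton.mpr (map_dvd C (Ideal.mem_span_singleton.mp hb)))
  · obtain ⟨u, hu⟩ := Ideal.mem_span_singleton.mp hGa
    have hrel : G - C u * L ∈ linearRelations f :=
      Ideal.subset_span ⟨hG.sub ((isHomogeneous_C σ u).mul hL), by
        simp only [map_sub, map_mul, aeval_C, hu, hLa, Algebra.algebraMap_self, RingHom.id_apply,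
          mul_comm, sub_self]⟩
    have hmul : C u * L ∈ Ideal.span {L} := Ideal.mem_span_singleton'.mpr ⟨_, rfl⟩
    refine Submodule.mem_sup_right ?_
    simpa using add_mem (Submodule.mem_sup_right hrel) (Submodule.mem_sup_left hmul)

theorem mem_linearRelations_of_forall_mem_symRelations (hreg : a ∈ nonZeroDivisors R)
    (hL : L.IsHomogeneous 1) (hLa : aeval f L = a)
    (hsym : ∀ (t : ℕ) (F : MvPolynomial σ R), F.IsHomogeneous t → aeval f F = 0 →
      F ∈ symRelations f (Ideal.span {a})) :
    ∀ (t : ℕ) (F : MvPolynomial σ R), F.IsHomogeneous t → aeval f F = 0 →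
      F ∈ linearRelations f := by
  intro t
  induction t with
  | zero =>
    intro F hF hFf
    rw [← homogeneousComponent_eq_self hF, homogeneousComponent_zero] at hFf ⊢
    rw [aeval_C, Algebra.algebraMap_self, RingHom.id_apply] at hFf
    rw [hFf, map_zero]
    exact Ideal.zero_mem _
  | succ k ih =>
    intro F hF hFf
    have hK := (Ideal.homogeneous_span _ {L} (by simpa using ⟨1, hL⟩)).sup
      (linearRelations_isHomogeneous f)
    obtain ⟨B, hB, hFB⟩ := (isHomogeneous_C σ a).exists_sub_mul_mem_of_mem_span_sup hK
      (by rwa [zero_add]) (symRelations_span_singleton_le hL hLa (hsym _ F hF hFf))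
    have hFL : F ∈ Ideal.span {L} ⊔ linearRelations f := by
      simpa using add_mem hFB
        (C_mul_mem_span_sup_linearRelations hL hLa (hB.mem_span_range_X k.succ_ne_zero))
    obtain ⟨B', hB', hFB'⟩ := hL.exists_sub_mul_mem_of_mem_span_sup
      (linearRelations_isHomogeneous f) (by rwa [add_comm]) hFL
    have hB'f : aeval f B' = 0 := by
      have := aeval_eq_zero_of_mem_linearRelations f hFB'
      rwa [map_sub, map_mul, hFf, hLa, zero_sub, neg_eq_zero,
        mul_left_mem_nonZeroDivisors_eq_zero_iff hreg] at this
    simpa using add_mem hFB' (Ideal.mul_mem_left _ L (ih B' hB' hB'f))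

end MvPolynomial

section Rees

theorem aeval_C_mul_X_monomial {σ : Type*} (f : σ → R) (d : σ →₀ ℕ) (c : R) :
    MvPolynomial.aeval (fun i => C (f i) * X) (MvPolynomial.monomial d c) =
      C (MvPolynomial.aeval f (MvPolynomial.monomial d c)) * X ^ d.degree := by
  simp only [MvPolynomial.aeval_monomial, Finsupp.prod, mul_pow, Finset.prod_mul_distrib,
    Finset.prod_pow_eq_pow_sum, ← Polynomial.C_pow, ← map_prod, Polynomial.algebraMap_eq,
    Algebra.algebraMap_self, RingHom.id_apply, map_mul, Finsupp.degree_apply, mul_assoc]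

variable (I : Ideal R) {n : ℕ} (f : Fin n → R) (hf : ∀ i, f i ∈ I)

theorem coe_reesPres (F : MvPolynomial (Fin n) R) :
    ((reesPres I f hf F : reesAlgebra I) : R[X]) = MvPolynomial.aeval (fun i => C (f i) * X) F :=
  MvPolynomial.comp_aeval_apply _ (reesAlgebra I).val F

theorem coeff_coe_reesPres (F : MvPolynomial (Fin n) R) (t : ℕ) :
    ((reesPres I f hf F : reesAlgebra I) : R[X]).coeff t =
      MvPolynomial.aeval f (MvPolynomial.homogeneousComponent t F) := by
  rw [coe_reesPres]
  induction F using MvPolynomial.induction_on' with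
  | monomial d c =>
    rw [aeval_C_mul_X_monomial, MvPolynomial.homogeneousComponent_of_mem
      (MvPolynomial.isHomogeneous_monomial c rfl), coeff_C_mul_X_pow]
    split_ifs <;> simp
  | add F G hF hG => simp only [map_add, coeff_add, hF, hG]

theorem reesPres_eq_zero_iff (F : MvPolynomial (Fin n) R) :
    reesPres I f hf F = 0 ↔
      ∀ t, MvPolynomial.aeval f (MvPolynomial.homogeneousComponent t F) = 0 := by
  simp only [← Subtype.coe_inj, ZeroMemClass.coe_zero, Polynomial.ext_iff, coeff_coe_reesPres,
    coeff_zero]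

theorem reesPres_eq_zero_iff_of_isHomogeneous {F : MvPolynomial (Fin n) R} {t : ℕ}
    (hF : F.IsHomogeneous t) : reesPres I f hf F = 0 ↔ MvPolynomial.aeval f F = 0 := by
  rw [reesPres_eq_zero_iff]
  refine ⟨fun h => by simpa [MvPolynomial.homogeneousComponent_eq_self hF] using h t,
    fun h s => ?_⟩
  rw [MvPolynomial.homogeneousComponent_of_mem hF]
  split_ifs <;> simp [h]

theorem coe_reesPres_of_isHomogeneous {F : MvPolynomial (Fin n) R} {t : ℕ}
    (hF : F.IsHomogeneous t) :
    ((reesPres I f hf F : reesAlgebra I) : R[X]) = C (MvPolynomial.aeval f F) * X ^ t := by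
  ext s
  rw [coeff_coe_reesPres, MvPolynomial.homogeneousComponent_of_mem hF, coeff_C_mul_X_pow]
  split_ifs <;> simp

variable {I f hf}

theorem reesPres_surjective (hgen : Ideal.span (Set.range f) = I) :
    Function.Surjective (reesPres I f hf) := by
  have hle : Algebra.adjoin R (Submodule.map (monomial 1 : R →ₗ[R] R[X]) I) ≤
      ((reesAlgebra I).val.comp (reesPres I f hf)).range := by
    refine Algebra.adjoin_le ?_
    rintro _ ⟨r, hr, rfl⟩
    obtain ⟨L, hL, rfl⟩ := MvPolynomial.exists_isHomogeneous_one_aeval_eq f (hgen ▸ hr)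
    exact ⟨L, by simp [coe_reesPres_of_isHomogeneous I f hf hL, C_mul_X_eq_monomial]⟩
  intro y
  obtain ⟨F, hF⟩ := hle (by rw [adjoin_monomial_eq_reesAlgebra]; exact y.2)
  exact ⟨F, Subtype.ext hF⟩

theorem aluffiIdeal_eq_map_symRelations (hgen : Ideal.span (Set.range f) = I) (J : Ideal R) :
    aluffiIdeal I J = (MvPolynomial.symRelations f J).map
      (reesPres I f hf : MvPolynomial (Fin n) R →+* reesAlgebra I) := by
  refine le_antisymm (Ideal.span_le.mpr ?_) (Ideal.map_le_iff_le_comap.mpr (Ideal.span_le.mpr ?_))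
  · rintro x ⟨b, hb, hx | hx⟩
    · have : x = reesPres I f hf (MvPolynomial.C b) := by
        ext1
        simp [hx, Polynomial.algebraMap_eq]
      exact this ▸ Ideal.mem_map_of_mem _ (Ideal.subset_span (Or.inl ⟨b, hb, rfl⟩))
    · have hbI : b ∈ I := by
        simpa [hx] using (mem_reesAlgebra_iff I _).mp x.2 1
      obtain ⟨L, hL, rfl⟩ := MvPolynomial.exists_isHomogeneous_one_aeval_eq f (hgen ▸ hbI)
      have : x = reesPres I f hf L := by
        ext1
        rw [hx, coe_reesPres_of_isHomogeneous I f hf hL, pow_one]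
      exact this ▸ Ideal.mem_map_of_mem _ (Ideal.subset_span (Or.inr ⟨hL, hb⟩))
  · rintro G (⟨b, hb, rfl⟩ | ⟨hG, hGJ⟩)
    · refine Ideal.subset_span ⟨b, hb, Or.inl ?_⟩
      simp [Polynomial.algebraMap_eq]
    · refine Ideal.subset_span ⟨_, hGJ, Or.inr ?_⟩
      exact (coe_reesPres_of_isHomogeneous I f hf hG).trans (by rw [pow_one])

theorem ker_aluffi_comp_reesPres_eq_symRelations_iff (hgen : Ideal.span (Set.range f) = I)
    (J : Ideal R) :
    RingHom.ker ((Ideal.Quotient.mk (aluffiIdeal I J)).comp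
        (reesPres I f hf : MvPolynomial (Fin n) R →+* reesAlgebra I)) =
      MvPolynomial.symRelations f J ↔
    RingHom.ker (reesPres I f hf : MvPolynomial (Fin n) R →+* reesAlgebra I) ≤
      MvPolynomial.symRelations f J := by
  rw [← RingHom.comap_ker, Ideal.mk_ker, aluffiIdeal_eq_map_symRelations (hf := hf) hgen,
    Ideal.comap_map_of_surjective
      (reesPres I f hf : MvPolynomial (Fin n) R →+* reesAlgebra I)
      (reesPres_surjective (hf := hf) hgen), ← RingHom.ker_eq_comap_bot, sup_eq_left]

variable (I f hf)

theorem linearRelations_le_ker_reesPres :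
    MvPolynomial.linearRelations f ≤
      RingHom.ker (reesPres I f hf : MvPolynomial (Fin n) R →+* reesAlgebra I) :=
  Ideal.span_le.mpr fun _ hG => (reesPres_eq_zero_iff_of_isHomogeneous I f hf hG.1).mpr hG.2

theorem ker_reesPres_eq_span_iff_le_linearRelations :
    RingHom.ker (reesPres I f hf : MvPolynomial (Fin n) R →+* reesAlgebra I) =
        Ideal.span {F | F ∈ RingHom.ker
          (reesPres I f hf : MvPolynomial (Fin n) R →+* reesAlgebra I) ∧ F.IsHomogeneous 1} ↔
      RingHom.ker (reesPres I f hf : MvPolynomial (Fin n) R →+* reesAlgebra I) ≤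
        MvPolynomial.linearRelations f := by
  have hspan : {F | F ∈ RingHom.ker
      (reesPres I f hf : MvPolynomial (Fin n) R →+* reesAlgebra I) ∧ F.IsHomogeneous 1} =
        {F | F.IsHomogeneous 1 ∧ MvPolynomial.aeval f F = 0} := by
    ext F
    simp only [Set.mem_ofPred_eq, RingHom.mem_ker]
    exact ⟨fun h => ⟨h.2, (reesPres_eq_zero_iff_of_isHomogeneous I f hf h.2).mp h.1⟩,
      fun h => ⟨(reesPres_eq_zero_iff_of_isHomogeneous I f hf h.1).mpr h.2, h.1⟩⟩
  rw [hspan]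
  exact ⟨le_of_eq, fun h => le_antisymm h (linearRelations_le_ker_reesPres I f hf)⟩

variable {I f hf}

theorem ker_reesPres_le_linearRelations {a : R} (haI : a ∈ I) (hreg : a ∈ nonZeroDivisors R)
    (hgen : Ideal.span (Set.range f) = I)
    (hsym : RingHom.ker (reesPres I f hf : MvPolynomial (Fin n) R →+* reesAlgebra I) ≤
      MvPolynomial.symRelations f (Ideal.span {a})) :
    RingHom.ker (reesPres I f hf : MvPolynomial (Fin n) R →+* reesAlgebra I) ≤
      MvPolynomial.linearRelations f := by
  obtain ⟨L, hL, hLa⟩ := MvPolynomial.exists_isHomogeneous_one_aeval_eq f (hgen ▸ haI)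
  have hrel := MvPolynomial.mem_linearRelations_of_forall_mem_symRelations hreg hL hLa
    fun _ G hG hGf => hsym ((reesPres_eq_zero_iff_of_isHomogeneous I f hf hG).mpr hGf)
  intro F hF
  rw [RingHom.mem_ker, RingHom.coe_coe, reesPres_eq_zero_iff] at hF
  rw [← MvPolynomial.sum_homogeneousComponent F]
  exact Ideal.sum_mem _ fun t _ =>
    hrel t _ (MvPolynomial.homogeneousComponent_isHomogeneous t F) (hF t)

end Rees

theorem linear_type_iff_sym_to_aluffi_iso_general
    (I : Ideal R) (a : R) (haI : a ∈ I) (hreg : a ∈ nonZeroDivisors R) :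
    IsLinearType R I ↔
      ∀ (n : ℕ) (f : Fin n → R) (hf : ∀ i, f i ∈ I),
        Ideal.span (Set.range f) = I →
        RingHom.ker ((Ideal.Quotient.mk (aluffiIdeal I (Ideal.span {a}))).comp
            (reesPres I f hf : MvPolynomial (Fin n) R →+* reesAlgebra I)) =
          Ideal.span ({F : MvPolynomial (Fin n) R | ∃ b ∈ Ideal.span ({a} : Set R),
              F = MvPolynomial.C b} ∪
            {F : MvPolynomial (Fin n) R | F.IsHomogeneous 1 ∧
              MvPolynomial.aeval f F ∈ Ideal.span ({a} : Set R)}) := by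
  constructor
  · intro hlin n f hf hgen
    refine (ker_aluffi_comp_reesPres_eq_symRelations_iff hgen _).mpr ?_
    exact ((ker_reesPres_eq_span_iff_le_linearRelations I f hf).mp (hlin n f hf hgen)).trans
      (MvPolynomial.linearRelations_le_symRelations f _)
  · intro haluffi n f hf hgen
    refine (ker_reesPres_eq_span_iff_le_linearRelations I f hf).mpr ?_
    exact ker_reesPres_le_linearRelations haI hreg hgen
      ((ker_aluffi_comp_reesPres_eq_symRelations_iff hgen _).mp (haluffi n f hf hgen))

/-- for `a ∈ I` a non-zero-divisor of a Noetherian ring `R`, the ideal `I`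
is of linear type over `R` if and only if the natural surjection
`S_{R/(a)}(I/(a)) ↠ 𝒜_{R↠R/(a)}(I/(a))` is an isomorphism; the latter is expressed by
saying that, for every presentation, the kernel of `R[T] ↠ 𝒜` equals the kernel
`((a)R[T], degree-one forms F with F(f) ∈ (a))` of `R[T] ↠ S_{R/(a)}(I/(a))`. -/
theorem linear_type_iff_sym_to_aluffi_iso [IsNoetherianRing R]
    (I : Ideal R) (a : R) (haI : a ∈ I) (hreg : a ∈ nonZeroDivisors R) :
    IsLinearType R I ↔
      ∀ (n : ℕ) (f : Fin n → R) (hf : ∀ i, f i ∈ I),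
        Ideal.span (Set.range f) = I →
        RingHom.ker ((Ideal.Quotient.mk (aluffiIdeal I (Ideal.span {a}))).comp
            (reesPres I f hf : MvPolynomial (Fin n) R →+* reesAlgebra I)) =
          Ideal.span ({F : MvPolynomial (Fin n) R | ∃ b ∈ Ideal.span ({a} : Set R),
              F = MvPolynomial.C b} ∪
            {F : MvPolynomial (Fin n) R | F.IsHomogeneous 1 ∧
              MvPolynomial.aeval f F ∈ Ideal.span ({a} : Set R)}) :=
  linear_type_iff_sym_to_aluffi_iso_general I a haI hreg
end

section
/- Let R be a commutative ring with ideals J and 𝔞, and set I = J + 𝔞. If J ∩ 𝔞^t ⊆ J·𝔞^{t-1} for every t ≥ 1, then J ∩ I^t = J·I^{t-1} for every t ≥ 1; equivalently, the natural surjection 𝒜_{R↠R/J}(I/J) ↠ Rees_{R/J}(I/J) from the Aluffi algebra onto the Rees algebra of I/J over R/J is an isomorphism. -/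
/-! Since `(J + 𝔞)^(n+1) ⊆ J·(J + 𝔞)^n + 𝔞^(n+1)` and `J·(J + 𝔞)^n ⊆ J`, the modular law gives
`J ∩ (J + 𝔞)^(n+1) ⊆ J·(J + 𝔞)^n + (J ∩ 𝔞^(n+1))`, and the hypothesis puts the last summand
inside `J·𝔞^n ⊆ J·(J + 𝔞)^n`. -/

namespace Ideal

theorem sup_pow_succ_le_mul_sup_pow {R : Type*} [CommSemiring R] (J a : Ideal R) (n : ℕ) :
    (J ⊔ a) ^ (n + 1) ≤ J * (J ⊔ a) ^ n ⊔ a ^ (n + 1) := by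
  induction n with
  | zero => simp
  | succ n ih =>
    have ha : J * ((J ⊔ a) ^ n * a) ≤ J * (J ⊔ a) ^ (n + 1) := by
      rw [pow_succ]; gcongr; exact le_sup_right
    calc (J ⊔ a) ^ (n + 2) = J * (J ⊔ a) ^ (n + 1) ⊔ (J ⊔ a) ^ (n + 1) * a := by
          rw [pow_succ _ (n + 1), mul_sup, mul_comm]
      _ ≤ J * (J ⊔ a) ^ (n + 1) ⊔ (J * (J ⊔ a) ^ n ⊔ a ^ (n + 1)) * a := by gcongr
      _ ≤ J * (J ⊔ a) ^ (n + 1) ⊔ a ^ (n + 2) := by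
          rw [sup_mul, mul_assoc, ← pow_succ, ← sup_assoc, sup_eq_left.mpr ha]

theorem inf_sup_pow_succ_eq_mul_of_inf_pow_le {R : Type*} [CommRing R] (J a : Ideal R) (n : ℕ)
    (h : J ⊓ a ^ (n + 1) ≤ J * a ^ n) : J ⊓ (J ⊔ a) ^ (n + 1) = J * (J ⊔ a) ^ n := by
  refine le_antisymm ?_ (le_inf Ideal.mul_le_left ?_)
  · calc J ⊓ (J ⊔ a) ^ (n + 1) ≤ J ⊓ (J * (J ⊔ a) ^ n ⊔ a ^ (n + 1)) := by
          gcongr; exact sup_pow_succ_le_mul_sup_pow J a n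
      _ = J * (J ⊔ a) ^ n ⊔ J ⊓ a ^ (n + 1) := by
          rw [inf_comm, sup_inf_assoc_of_le _ Ideal.mul_le_left, inf_comm]
      _ ≤ J * (J ⊔ a) ^ n := sup_le le_rfl (h.trans (by gcongr; exact le_sup_right))
  · rw [pow_succ']; gcongr; exact le_sup_left

end Ideal

/-- let `J` and `𝔞` be ideals of a commutative ring `R` and `I = J + 𝔞`.
If `J ∩ 𝔞^t ⊆ J·𝔞^{t-1}` for every `t ≥ 1`, then `J ∩ I^t = J·I^{t-1}` for every `t ≥ 1`;
that is, the natural surjection `𝒜_{R↠R/J}(I/J) ↠ Rees_{R/J}(I/J)` is an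
isomorphism (its kernel `⊕_{t≥2}(J ∩ I^t)/(J·I^{t-1})` vanishes). -/
theorem aluffi_to_rees_iso_of_residual_generators
    {R : Type*} [CommRing R] (J a : Ideal R)
    (h : ∀ t : ℕ, 1 ≤ t → J ⊓ a ^ t ≤ J * a ^ (t - 1)) :
    ∀ t : ℕ, 1 ≤ t → J ⊓ (J ⊔ a) ^ t = J * (J ⊔ a) ^ (t - 1) := by
  rintro (_ | n) ht
  · omega
  exact Ideal.inf_sup_pow_succ_eq_mul_of_inf_pow_le J a n (h (n + 1) ht)
end

section
/- Let 𝔞 be an ideal of a commutative ring R and let a ∈ R be an element such that 𝔞^t : a = 𝔞^t for every integer t ≥ 0. Then (a) ∩ (a, 𝔞)^t = a·(a, 𝔞)^{t-1} for every t ≥ 1; equivalently, the inclusion (a) ⊆ (a) + 𝔞 induces an isomorphism 𝒜_{R↠R/(a)}(((a)+𝔞)/(a)) ≅ Rees_{R/(a)}(((a)+𝔞)/(a)). -/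
/-
The ideal `(a) ∩ L` is always `a · (L : a)`, so the hypothesis gives `(a) ∩ 𝔞^t = a · 𝔞^t`.
Expanding `((a) + 𝔞)^t = a · ((a) + 𝔞)^{t-1} + 𝔞^t` and applying the modular law (the first summand
already lies in `(a)`) yields `(a) ∩ ((a) + 𝔞)^t = a · ((a) + 𝔞)^{t-1} + a · 𝔞^t`, and the last
summand is absorbed since `𝔞^t ⊆ ((a) + 𝔞)^{t-1}`.
-/

namespace Ideal

variable {R : Type*} [CommSemiring R]

theorem sup_pow_succ (I J : Ideal R) (n : ℕ) :
    (I ⊔ J) ^ (n + 1) = I * (I ⊔ J) ^ n ⊔ J ^ (n + 1) := by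
  refine le_antisymm ?_ (sup_le ?_ ?_)
  · induction n with
    | zero => simp
    | succ n ih =>
      have hJ : J ^ (n + 1) ≤ (I ⊔ J) ^ (n + 1) := pow_right_mono le_sup_right _
      calc (I ⊔ J) ^ (n + 1 + 1) = (I ⊔ J) * (I ⊔ J) ^ (n + 1) := pow_succ' _ _
        _ ≤ (I ⊔ J) * (I * (I ⊔ J) ^ n ⊔ J ^ (n + 1)) := mul_mono_right ih
        _ = I * ((I ⊔ J) * (I ⊔ J) ^ n) ⊔ I * J ^ (n + 1) ⊔ J * J ^ (n + 1) := by
            rw [mul_sup, mul_left_comm (I ⊔ J) I, sup_mul I J (J ^ (n + 1)), sup_assoc]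
        _ ≤ I * (I ⊔ J) ^ (n + 1) ⊔ J ^ (n + 1 + 1) := by
            rw [← pow_succ', ← pow_succ', sup_le_iff]
            exact ⟨sup_le le_sup_left (le_sup_of_le_left (mul_mono_right hJ)), le_sup_right⟩
  · rw [pow_succ']
    exact mul_mono_left le_sup_left
  · exact pow_right_mono le_sup_right _

theorem span_singleton_inf_eq_mul_colon (a : R) (L : Ideal R) :
    span {a} ⊓ L = span {a} * L.colon (span {a}) := by
  ext x
  simp only [mem_inf, mem_span_singleton', mem_span_singleton_mul, mem_colon_span_singleton]
  constructor
  · rintro ⟨⟨r, rfl⟩, hx⟩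
    exact ⟨r, hx, mul_comm _ _⟩
  · rintro ⟨r, hr, rfl⟩
    exact ⟨⟨r, mul_comm _ _⟩, by rwa [mul_comm]⟩

end Ideal

open Ideal

/-- let `𝔞` be an ideal of `R` and `a ∈ R` with `𝔞^t : a = 𝔞^t` for every
`t ≥ 0`.  Then `(a) ∩ (a,𝔞)^t = a·(a,𝔞)^{t-1}` for every `t ≥ 1`; that is, the inclusion
`(a) ⊆ (a) + 𝔞` induces an isomorphism
`𝒜_{R↠R/(a)}(((a)+𝔞)/(a)) ≅ Rees_{R/(a)}(((a)+𝔞)/(a))`. -/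
theorem aluffi_to_rees_iso_of_colon_stable
    {R : Type*} [CommRing R] (a : R) (𝔞 : Ideal R)
    (h : ∀ t : ℕ, (𝔞 ^ t).colon (Ideal.span {a}) = 𝔞 ^ t) :
    ∀ t : ℕ, 1 ≤ t →
      Ideal.span {a} ⊓ (Ideal.span {a} ⊔ 𝔞) ^ t =
        Ideal.span {a} * (Ideal.span {a} ⊔ 𝔞) ^ (t - 1) := by
  intro t ht
  obtain ⟨n, rfl⟩ : ∃ n, t = n + 1 := ⟨t - 1, by omega⟩
  rw [Nat.add_sub_cancel]
  have h𝔞 : 𝔞 ^ (n + 1) ≤ (span {a} ⊔ 𝔞) ^ n :=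
    (pow_le_pow_right n.le_succ).trans (pow_right_mono le_sup_right n)
  calc span {a} ⊓ (span {a} ⊔ 𝔞) ^ (n + 1)
      = span {a} ⊓ (𝔞 ^ (n + 1) ⊔ span {a} * (span {a} ⊔ 𝔞) ^ n) := by
        rw [sup_pow_succ, sup_comm]
    _ = span {a} ⊓ 𝔞 ^ (n + 1) ⊔ span {a} * (span {a} ⊔ 𝔞) ^ n :=
        (inf_sup_assoc_of_le _ mul_le_left).symm
    _ = span {a} * 𝔞 ^ (n + 1) ⊔ span {a} * (span {a} ⊔ 𝔞) ^ n := by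
        rw [span_singleton_inf_eq_mul_colon, h]
    _ = span {a} * (span {a} ⊔ 𝔞) ^ n := sup_eq_right.mpr (mul_mono_right h𝔞)
end

section
/- Let J ⊆ I ⊊ R be ideals of a Noetherian commutative ring R such that the image of I in R/J contains a regular element (non-zero-divisor) of R/J. Then the R/J-torsion submodule of the Aluffi algebra 𝒜_{R↠R/J}(I/J) equals the kernel of the natural surjection 𝒜_{R↠R/J}(I/J) ↠ Rees_{R/J}(I/J), i.e., equals the Valabrega–Valla module ⊕_{t≥2} (J ∩ I^t)/(J·I^{t-1}). -/
/-!
An element `c·d·uᵗ` of the Rees algebra with `c ∈ J` and `d ∈ I^{t-1}` is a multiple of the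
generator `c·u` (or `c` if `t = 0`) of the defining ideal of the Aluffi algebra. Hence for
`b ∈ I` and `y ∈ J̃` of degree at most `n + 1`, every homogeneous component of `bⁿ·y` lies in
that ideal, so `J̃` is torsion once `b` is regular modulo `J`. Conversely the defining ideal lies
in `J̃`, and `J̃` is saturated, coefficient by coefficient, with respect to elements regular
modulo `J`.
-/

open Polynomial

variable {R : Type*} [CommRing R]

/-- The extended–contracted ideal `𝔭̃ = 𝔭R[u] ∩ Rees_R(I) = ⊕_{t≥0} (𝔭 ∩ I^t)u^t` of an
ideal `𝔭 ⊆ R` inside the Rees algebra of `I`. -/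
noncomputable def tildeIdeal (I p : Ideal R) : Ideal (reesAlgebra I) :=
  Ideal.comap ((reesAlgebra I).val.toRingHom) (p.map (Polynomial.C : R →+* R[X]))

section

variable {I J : Ideal R}

lemma mem_tildeIdeal_iff (y : reesAlgebra I) :
    y ∈ tildeIdeal I J ↔ ∀ n, (y : R[X]).coeff n ∈ J := by
  rw [tildeIdeal, Ideal.mem_comap]
  exact Ideal.mem_map_C_iff

lemma aluffiIdeal_le_tildeIdeal : aluffiIdeal I J ≤ tildeIdeal I J := by
  rw [aluffiIdeal, Ideal.span_le]
  rintro x ⟨a, ha, hx | hx⟩ <;> rw [SetLike.mem_coe, mem_tildeIdeal_iff, hx] <;> intro n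
  · rw [coeff_C]
    split_ifs
    exacts [ha, J.zero_mem]
  · rw [coeff_C_mul]
    exact J.mul_mem_right _ ha

lemma mem_tildeIdeal_of_algebraMap_mul_mem {r : R}
    (hr : Ideal.Quotient.mk J r ∈ nonZeroDivisors (R ⧸ J)) {y : reesAlgebra I}
    (hry : algebraMap R (reesAlgebra I) r * y ∈ tildeIdeal I J) : y ∈ tildeIdeal I J := by
  rw [mem_tildeIdeal_iff] at hry ⊢
  intro n
  have hrn : r * (y : R[X]).coeff n ∈ J := by
    simpa [algebraMap_eq, coeff_C_mul] using hry n
  rw [← Ideal.Quotient.eq_zero_iff_mem] at hrn ⊢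
  exact hr.1 _ (by rwa [map_mul] at hrn)

lemma reesAlgebra.mem_ideal_of_forall_monomial_mem {K : Ideal (reesAlgebra I)}
    (z : reesAlgebra I)
    (h : ∀ t (w : reesAlgebra I), (w : R[X]) = monomial t ((z : R[X]).coeff t) → w ∈ K) :
    z ∈ K := by
  have hcomp : ∀ t, monomial t ((z : R[X]).coeff t) ∈ reesAlgebra I := fun t =>
    reesAlgebra.monomial_mem.mpr ((mem_reesAlgebra_iff I _).mp z.2 t)
  have hz : z = ∑ t ∈ (z : R[X]).support, ⟨_, hcomp t⟩ := by
    apply Subtype.ext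
    simpa using (z : R[X]).as_sum_support
  rw [hz]
  exact K.sum_mem fun t _ => h t _ rfl

lemma monomial_mem_aluffiIdeal (hJI : J ≤ I) {t : ℕ} {c d : R} (hc : c ∈ J)
    (hd : d ∈ I ^ (t - 1)) (w : reesAlgebra I) (hw : (w : R[X]) = monomial t (c * d)) :
    w ∈ aluffiIdeal I J := by
  cases t with
  | zero =>
    have hgen : algebraMap R (reesAlgebra I) c ∈ aluffiIdeal I J :=
      Ideal.subset_span ⟨c, hc, Or.inl rfl⟩
    have hw' : w = algebraMap R (reesAlgebra I) c * algebraMap R (reesAlgebra I) d := by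
      apply Subtype.ext
      simp [hw, algebraMap_eq]
    exact hw' ▸ Ideal.mul_mem_right _ _ hgen
  | succ s =>
    have hcX : C c * X ∈ reesAlgebra I := by
      rw [C_mul_X_eq_monomial]
      exact reesAlgebra.monomial_mem.mpr (by simpa using hJI hc)
    have hgen : (⟨C c * X, hcX⟩ : reesAlgebra I) ∈ aluffiIdeal I J :=
      Ideal.subset_span ⟨c, hc, Or.inr rfl⟩
    have hd' : monomial s d ∈ reesAlgebra I := reesAlgebra.monomial_mem.mpr (by simpa using hd)
    have hw' : w = ⟨C c * X, hcX⟩ * ⟨monomial s d, hd'⟩ := by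
      apply Subtype.ext
      simp only [hw, Subalgebra.coe_mul, ← C_mul_X_pow_eq_monomial, C_mul, pow_succ]
      ring
    exact hw' ▸ Ideal.mul_mem_right _ _ hgen

lemma algebraMap_pow_mul_mem_aluffiIdeal (hJI : J ≤ I) {b : R} (hb : b ∈ I) {n : ℕ}
    {y : reesAlgebra I} (hy : y ∈ tildeIdeal I J) (hdeg : (y : R[X]).natDegree ≤ n + 1) :
    algebraMap R (reesAlgebra I) (b ^ n) * y ∈ aluffiIdeal I J := by
  refine reesAlgebra.mem_ideal_of_forall_monomial_mem _ fun t w hw => ?_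
  have hcoeff : ((algebraMap R (reesAlgebra I) (b ^ n) * y : reesAlgebra I) : R[X]).coeff t =
      (y : R[X]).coeff t * b ^ n := by
    rw [Subalgebra.coe_mul, Subalgebra.coe_algebraMap, algebraMap_eq, coeff_C_mul, mul_comm]
  rw [hcoeff] at hw
  rcases le_or_gt t (n + 1) with ht | ht
  · refine monomial_mem_aluffiIdeal hJI ((mem_tildeIdeal_iff y).mp hy t) ?_ w hw
    exact Ideal.pow_le_pow_right (by omega) (Ideal.pow_mem_pow hb n)
  · rw [coeff_eq_zero_of_natDegree_lt (hdeg.trans_lt ht), zero_mul, map_zero] at hw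
    exact (show w = 0 from Subtype.ext hw) ▸ Ideal.zero_mem _

end

theorem aluffi_torsion_is_valabrega_valla_general
    (I J : Ideal R) (hJI : J ≤ I)
    (hreg : ∃ b ∈ I, Ideal.Quotient.mk J b ∈ nonZeroDivisors (R ⧸ J)) :
    ∀ x : AluffiAlgebra I J,
      (x ∈ (tildeIdeal I J).map (Ideal.Quotient.mk (aluffiIdeal I J)) ↔
        ∃ r : R, Ideal.Quotient.mk J r ∈ nonZeroDivisors (R ⧸ J) ∧
          algebraMap R (AluffiAlgebra I J) r * x = 0) := by
  intro x
  obtain ⟨y, rfl⟩ := Ideal.Quotient.mk_surjective x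
  have hmk : ∀ r : R, algebraMap R (AluffiAlgebra I J) r * Ideal.Quotient.mk _ y =
      Ideal.Quotient.mk _ (algebraMap R (reesAlgebra I) r * y) := fun _ => rfl
  simp only [Ideal.mem_quotient_iff_mem aluffiIdeal_le_tildeIdeal, hmk,
    Ideal.Quotient.eq_zero_iff_mem]
  constructor
  · intro hy
    obtain ⟨b, hbI, hbreg⟩ := hreg
    exact ⟨b ^ (y : R[X]).natDegree, by simpa using pow_mem hbreg _,
      algebraMap_pow_mul_mem_aluffiIdeal hJI hbI hy (Nat.le_succ _)⟩
  · rintro ⟨r, hr, hry⟩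
    exact mem_tildeIdeal_of_algebraMap_mul_mem hr (aluffiIdeal_le_tildeIdeal hry)

/-- if `I/J` contains a regular element of `R/J`, the `R/J`-torsion of the
Aluffi algebra is the kernel of the natural surjection `𝒜_{R↠R/J}(I/J) ↠ Rees_{R/J}(I/J)`,
i.e. the Valabrega–Valla module `⊕_{t≥2}(J ∩ I^t)/(J·I^{t-1})`; the latter kernel is the
image of `J̃ = ⊕_t (J ∩ I^t)u^t` in the Aluffi algebra. -/
theorem aluffi_torsion_is_valabrega_valla [IsNoetherianRing R]
    (I J : Ideal R) (hJI : J ≤ I) (hI : I ≠ ⊤)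
    (hreg : ∃ b ∈ I, Ideal.Quotient.mk J b ∈ nonZeroDivisors (R ⧸ J)) :
    ∀ x : AluffiAlgebra I J,
      (x ∈ (tildeIdeal I J).map (Ideal.Quotient.mk (aluffiIdeal I J)) ↔
        ∃ r : R, Ideal.Quotient.mk J r ∈ nonZeroDivisors (R ⧸ J) ∧
          algebraMap R (AluffiAlgebra I J) r * x = 0) :=
  aluffi_torsion_is_valabrega_valla_general I J hJI hreg
end

section
/- Let J ⊆ I ⊆ R be ideals of a commutative ring R. Assume ℓ ≥ 1 is an integer such that J ∩ I^t = (J ∩ I^ℓ)·I^{t−ℓ} for all t ≥ ℓ (ℓ is an upper bound for the Artin–Rees number of J relative to I) and that J ∩ I^t = J·I^{t−1} for every t ≤ ℓ. Then J ∩ I^t = J·I^{t−1} for every t ≥ 1; equivalently, the surjection 𝒜_{R↠R/J}(I/J) ↠ Rees_{R/J}(I/J) is an isomorphism. -/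
/-- let `J ⊆ I` be ideals of a ring `R`, and `ℓ ≥ 1` an upper bound for
the Artin–Rees number of `J` relative to `I` (i.e. `J ∩ I^t = (J ∩ I^ℓ)·I^{t−ℓ}` for all
`t ≥ ℓ`) such that `J ∩ I^t = J·I^{t−1}` for all `1 ≤ t ≤ ℓ`.  Then
`J ∩ I^t = J·I^{t−1}` for all `t ≥ 1`; that is, the surjection
`𝒜_{R↠R/J}(I/J) ↠ Rees_{R/J}(I/J)` is an isomorphism. -/
theorem aluffi_to_rees_iso_of_artin_rees_bound {R : Type*} [CommRing R]
    (I J : Ideal R) (hJI : J ≤ I)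
    (ℓ : ℕ) (hℓ : 1 ≤ ℓ)
    (hAR : ∀ t : ℕ, ℓ ≤ t → J ⊓ I ^ t = (J ⊓ I ^ ℓ) * I ^ (t - ℓ))
    (hlow : ∀ t : ℕ, 1 ≤ t → t ≤ ℓ → J ⊓ I ^ t = J * I ^ (t - 1)) :
    ∀ t : ℕ, 1 ≤ t → J ⊓ I ^ t = J * I ^ (t - 1) := by
  intro t ht
  by_cases h : t ≤ ℓ
  · exact hlow t ht h
  · push_neg at h
    rw [hAR t h.le, hlow ℓ hℓ le_rfl, mul_assoc, ← pow_add]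
    congr 2
    omega
end
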